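/- Let X and Y be normed vector spaces, Φ : X → Y a map, u₀ ∈ X, and C* > 0, δ₀ > 0. Suppose that for every 0 < δ < δ₀ there exist sequences (u_n)_{n≥1} and (ũ_n)_{n≥1} contained in the ball B_δ(u₀) ⊆ X with ‖u_n − ũ_n‖_X → 0 as n → ∞ and limsup_{n→∞} ‖Φ(u_n) − Φ(ũ_n)‖_Y ≥ C* δ. Then Φ is not Fréchet differentiable at u₀. -/

import Mathlib

open Filter Topology

/-!
A Fréchet derivative `f'` at `u₀` makes `Φ` nearly Lipschitz on small balls: on `B_δ(u₀)` one has
`‖Φ y - Φ z‖ ≤ ε δ + ‖f'‖ ‖y - z‖`, with `ε` as small as we like once `δ` is small. Along sequences with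
`‖u_n - ũ_n‖ → 0` the limsup of `‖Φ u_n - Φ ũ_n‖` is then at most `ε δ`, which contradicts the lower
bound `C* δ` as soon as `ε < C*`.
-/

theorem HasFDerivAt.exists_pos_norm_sub_le_mul_add {X Y : Type*}
    [NormedAddCommGroup X] [NormedSpace ℝ X] [NormedAddCommGroup Y] [NormedSpace ℝ Y]
    {Φ : X → Y} {f' : X →L[ℝ] Y} {x : X} (hΦ : HasFDerivAt Φ f' x) {ε : ℝ} (hε : 0 < ε) :
    ∃ r > 0, ∀ δ ≤ r, ∀ y ∈ Metric.ball x δ, ∀ z ∈ Metric.ball x δ,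
      ‖Φ y - Φ z‖ ≤ ε * δ + ‖f'‖ * ‖y - z‖ := by
  obtain ⟨r, hr, hrem⟩ := Metric.eventually_nhds_iff.mp (hΦ.isLittleO.def (half_pos hε))
  refine ⟨r, hr, fun δ hδ y hy z hz => ?_⟩
  have remainder_le : ∀ w ∈ Metric.ball x δ, ‖Φ w - Φ x - f' (w - x)‖ ≤ ε / 2 * δ := fun w hw =>
    (hrem (lt_of_lt_of_le hw hδ)).trans
      (mul_le_mul_of_nonneg_left (by simpa [dist_eq_norm] using (Metric.mem_ball.mp hw).le) (half_pos hε).le)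
  have split : Φ y - Φ z =
      (Φ y - Φ x - f' (y - x)) - (Φ z - Φ x - f' (z - x)) + f' (y - z) := by
    simp only [map_sub]
    abel
  calc ‖Φ y - Φ z‖
      ≤ ‖Φ y - Φ x - f' (y - x)‖ + ‖Φ z - Φ x - f' (z - x)‖ + ‖f' (y - z)‖ := by
        rw [split]
        exact (norm_add_le _ _).trans (add_le_add_left (norm_sub_le _ _) _)
    _ ≤ ε / 2 * δ + ε / 2 * δ + ‖f'‖ * ‖y - z‖ := by
        gcongr
        · exact remainder_le y hy
        · exact remainder_le z hz
        · exact f'.le_opNorm _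
    _ = ε * δ + ‖f'‖ * ‖y - z‖ := by ring

theorem limsup_ofReal_le_of_le_add_of_tendsto_zero {a b : ℕ → ℝ} {c : ℝ}
    (hab : ∀ n, a n ≤ c + b n) (hb : Tendsto b atTop (𝓝 0)) :
    limsup (fun n => ENNReal.ofReal (a n)) atTop ≤ ENNReal.ofReal c := by
  have hlim : Tendsto (fun n => ENNReal.ofReal (c + b n)) atTop (𝓝 (ENNReal.ofReal c)) := by
    simpa using (ENNReal.tendsto_ofReal (tendsto_const_nhds.add hb))
  calc limsup (fun n => ENNReal.ofReal (a n)) atTop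
      ≤ limsup (fun n => ENNReal.ofReal (c + b n)) atTop :=
        limsup_le_limsup (Eventually.of_forall fun n => ENNReal.ofReal_le_ofReal (hab n))
    _ = ENNReal.ofReal c := hlim.limsup_eq

/-- Let `X` and `Y` be normed vector spaces, `Φ : X → Y` a map,
`u₀ ∈ X`, and `C* > 0`, `δ₀ > 0`.  Suppose that for every `0 < δ < δ₀` there exist
sequences `(u_n)` and `(ũ_n)` contained in the ball `B_δ(u₀) ⊆ X` with
`‖u_n − ũ_n‖_X → 0` as `n → ∞` and `limsup_{n→∞} ‖Φ(u_n) − Φ(ũ_n)‖_Y ≥ C* δ`.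
Then `Φ` is not Fréchet differentiable at `u₀`. -/
theorem not_frechet_differentiable_of_quantitative_nonuniformity
    {X Y : Type*} [NormedAddCommGroup X] [NormedSpace ℝ X]
    [NormedAddCommGroup Y] [NormedSpace ℝ Y]
    (Φ : X → Y) (u₀ : X) (Cs δ₀ : ℝ) (hCs : 0 < Cs) (hδ₀ : 0 < δ₀)
    (h : ∀ δ, 0 < δ → δ < δ₀ →
      ∃ u v : ℕ → X,
        (∀ n, u n ∈ Metric.ball u₀ δ) ∧ (∀ n, v n ∈ Metric.ball u₀ δ) ∧
        Tendsto (fun n => ‖u n - v n‖) atTop (𝓝 0) ∧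
        ENNReal.ofReal (Cs * δ) ≤
          Filter.limsup (fun n => ENNReal.ofReal ‖Φ (u n) - Φ (v n)‖) atTop) :
    ¬ DifferentiableAt ℝ Φ u₀ := by
  intro hΦ
  obtain ⟨r, hr, hnear⟩ := hΦ.hasFDerivAt.exists_pos_norm_sub_le_mul_add (half_pos hCs)
  set δ := min (δ₀ / 2) r
  have hδ : 0 < δ := lt_min (half_pos hδ₀) hr
  obtain ⟨u, v, hu, hv, huv, hlower⟩ :=
    h δ hδ ((min_le_left _ _).trans_lt (half_lt_self hδ₀))
  have hupper := limsup_ofReal_le_of_le_add_of_tendsto_zero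
    (fun n => hnear δ (min_le_right _ _) _ (hu n) _ (hv n))
    (by simpa using huv.const_mul ‖fderiv ℝ Φ u₀‖)
  have := (ENNReal.ofReal_le_ofReal_iff (by positivity)).mp (hlower.trans hupper)
  nlinarith
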